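/- Let ρ₀ > 0 be a constant, let e : ℝ → ℝ be smooth (the internal-energy constitutive function), and let u : ℝ × ℝ → ℝ be smooth. Define the velocity v = ∂ₜu, the stress S(x,t) = ρ₀·e′(∂ₓu(x,t)), the total energy I(x,t) = e(∂ₓu(x,t)) + v(x,t)²/2, and the elastic modulus c(x,t) = ρ₀·e″(∂ₓu(x,t)). If the balance of momentum ρ₀·∂ₜv = ∂ₓS holds at every point of ℝ², then the rate of change of the energy flux satisfies ∂ₜ(v·S)(x,t) = c(x,t)·∂ₓI(x,t) at every point (equation (2.3) of the paper). -/

import Mathlib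

open MeasureTheory

/-- Partial derivative in the first (space) variable. -/
noncomputable def dX (f : ℝ × ℝ → ℝ) : ℝ × ℝ → ℝ := fun p => deriv (fun x => f (x, p.2)) p.1

/-- Partial derivative in the second (time) variable. -/
noncomputable def dT (f : ℝ × ℝ → ℝ) : ℝ × ℝ → ℝ := fun p => deriv (fun t => f (p.1, t)) p.2

lemma slice_x {f : ℝ × ℝ → ℝ} (hf : Differentiable ℝ f) (p : ℝ × ℝ) :
    HasDerivAt (fun x => f (x, p.2)) (fderiv ℝ f p ((1:ℝ), (0:ℝ))) p.1 := by
  have h1 : HasFDerivAt (fun x : ℝ => (x, p.2)) (ContinuousLinearMap.inl ℝ ℝ ℝ) p.1 :=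
    hasFDerivAt_prodMk_left _ _
  have h2 := ((hf p).hasFDerivAt.comp p.1 (by simpa using h1))
  exact h2.hasDerivAt

lemma slice_t {f : ℝ × ℝ → ℝ} (hf : Differentiable ℝ f) (p : ℝ × ℝ) :
    HasDerivAt (fun t => f (p.1, t)) (fderiv ℝ f p ((0:ℝ), (1:ℝ))) p.2 := by
  have h1 : HasFDerivAt (fun t : ℝ => (p.1, t)) (ContinuousLinearMap.inr ℝ ℝ ℝ) p.2 :=
    hasFDerivAt_prodMk_right _ _
  have h2 := ((hf p).hasFDerivAt.comp p.2 (by simpa using h1))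
  exact h2.hasDerivAt

lemma hasDerivAt_dX {f : ℝ × ℝ → ℝ} (hf : Differentiable ℝ f) (p : ℝ × ℝ) :
    HasDerivAt (fun x => f (x, p.2)) (dX f p) p.1 := by
  have h := slice_x hf p
  have : dX f p = fderiv ℝ f p ((1:ℝ), (0:ℝ)) := h.deriv
  rw [this]; exact h

lemma hasDerivAt_dT {f : ℝ × ℝ → ℝ} (hf : Differentiable ℝ f) (p : ℝ × ℝ) :
    HasDerivAt (fun t => f (p.1, t)) (dT f p) p.2 := by
  have h := slice_t hf p
  have : dT f p = fderiv ℝ f p ((0:ℝ), (1:ℝ)) := h.deriv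
  rw [this]; exact h

lemma dX_eq {f : ℝ × ℝ → ℝ} (hf : Differentiable ℝ f) :
    dX f = fun p => fderiv ℝ f p ((1:ℝ), (0:ℝ)) := funext fun p => (slice_x hf p).deriv

lemma dT_eq {f : ℝ × ℝ → ℝ} (hf : Differentiable ℝ f) :
    dT f = fun p => fderiv ℝ f p ((0:ℝ), (1:ℝ)) := funext fun p => (slice_t hf p).deriv

lemma contDiff_dX {f : ℝ × ℝ → ℝ} (hf : ContDiff ℝ (⊤ : ℕ∞) f) : ContDiff ℝ (⊤ : ℕ∞) (dX f) := by
  rw [dX_eq (hf.differentiable (by simp))]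
  exact (hf.fderiv_right (by simp)).clm_apply contDiff_const

lemma contDiff_dT {f : ℝ × ℝ → ℝ} (hf : ContDiff ℝ (⊤ : ℕ∞) f) : ContDiff ℝ (⊤ : ℕ∞) (dT f) := by
  rw [dT_eq (hf.differentiable (by simp))]
  exact (hf.fderiv_right (by simp)).clm_apply contDiff_const

lemma clairaut {f : ℝ × ℝ → ℝ} (hf : ContDiff ℝ (⊤ : ℕ∞) f) (p : ℝ × ℝ) :
    dT (dX f) p = dX (dT f) p := by
  have hdiff : Differentiable ℝ f := hf.differentiable (by simp)
  have hfd : ContDiff ℝ (⊤ : ℕ∞) (fderiv ℝ f) := hf.fderiv_right (by simp)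
  have hfdd : Differentiable ℝ (fderiv ℝ f) := hfd.differentiable (by simp)
  -- fderiv of dX f
  have hX : ∀ w : ℝ × ℝ, fderiv ℝ (dX f) p w = fderiv ℝ (fderiv ℝ f) p w ((1:ℝ), (0:ℝ)) := by
    intro w
    have : dX f = fun q => (ContinuousLinearMap.apply ℝ ℝ ((1:ℝ),(0:ℝ))) (fderiv ℝ f q) := by
      rw [dX_eq hdiff]; rfl
    have hcomp : fderiv ℝ (fun q => (ContinuousLinearMap.apply ℝ ℝ ((1:ℝ),(0:ℝ))) (fderiv ℝ f q)) p
        = (ContinuousLinearMap.apply ℝ ℝ ((1:ℝ),(0:ℝ))).comp (fderiv ℝ (fderiv ℝ f) p) :=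
      ((ContinuousLinearMap.apply ℝ ℝ ((1:ℝ),(0:ℝ))).hasFDerivAt.comp p (hfdd p).hasFDerivAt).fderiv
    rw [this, hcomp]; rfl
  have hT : ∀ w : ℝ × ℝ, fderiv ℝ (dT f) p w = fderiv ℝ (fderiv ℝ f) p w ((0:ℝ), (1:ℝ)) := by
    intro w
    have : dT f = fun q => (ContinuousLinearMap.apply ℝ ℝ ((0:ℝ),(1:ℝ))) (fderiv ℝ f q) := by
      rw [dT_eq hdiff]; rfl
    have hcomp : fderiv ℝ (fun q => (ContinuousLinearMap.apply ℝ ℝ ((0:ℝ),(1:ℝ))) (fderiv ℝ f q)) p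
        = (ContinuousLinearMap.apply ℝ ℝ ((0:ℝ),(1:ℝ))).comp (fderiv ℝ (fderiv ℝ f) p) :=
      ((ContinuousLinearMap.apply ℝ ℝ ((0:ℝ),(1:ℝ))).hasFDerivAt.comp p (hfdd p).hasFDerivAt).fderiv
    rw [this, hcomp]; rfl
  have hdX : Differentiable ℝ (dX f) := (contDiff_dX hf).differentiable (by simp)
  have hdT : Differentiable ℝ (dT f) := (contDiff_dT hf).differentiable (by simp)
  have e1 : dT (dX f) p = fderiv ℝ (dX f) p ((0:ℝ),(1:ℝ)) := (slice_t hdX p).deriv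
  have e2 : dX (dT f) p = fderiv ℝ (dT f) p ((1:ℝ),(0:ℝ)) := (slice_x hdT p).deriv
  have sym := second_derivative_symmetric (f := f) (f' := fderiv ℝ f)
    (f'' := fderiv ℝ (fderiv ℝ f) p) (fun y => (hdiff y).hasFDerivAt)
    ((hfdd p).hasFDerivAt) ((0:ℝ),(1:ℝ)) ((1:ℝ),(0:ℝ))
  rw [e1, e2, hX, hT, sym]

/-- Equation (2.3): the rate of change of the energy flux equals the elastic
modulus times the gradient of the total energy, for an isentropic elastic medium. -/
theorem energy_flux_rate (ρ₀ : ℝ) (hρ : 0 < ρ₀)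
    (e : ℝ → ℝ) (he : ContDiff ℝ (⊤ : ℕ∞) e)
    (u : ℝ × ℝ → ℝ) (hu : ContDiff ℝ (⊤ : ℕ∞) u)
    (v S I c : ℝ × ℝ → ℝ)
    (hv : v = dT u)
    (hS : S = fun p => ρ₀ * deriv e (dX u p))
    (hI : I = fun p => e (dX u p) + (v p) ^ 2 / 2)
    (hc : c = fun p => ρ₀ * deriv (deriv e) (dX u p))
    (hmom : ∀ p : ℝ × ℝ, ρ₀ * dT v p = dX S p) :
    ∀ p : ℝ × ℝ, dT (fun q => v q * S q) p = c p * dX I p := by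
  intro p
  set g := dX u with hg
  have hgc : ContDiff ℝ (⊤ : ℕ∞) g := contDiff_dX hu
  have hgd : Differentiable ℝ g := hgc.differentiable (by simp)
  have hvc : ContDiff ℝ (⊤ : ℕ∞) v := hv ▸ contDiff_dT hu
  have hvd : Differentiable ℝ v := hvc.differentiable (by simp)
  have hderiv_contDiff : ∀ f : ℝ → ℝ, ContDiff ℝ (⊤ : ℕ∞) f → ContDiff ℝ (⊤ : ℕ∞) (deriv f) := by
    intro f hf
    have : deriv f = fun x => fderiv ℝ f x 1 := rfl
    rw [this]
    exact (hf.fderiv_right (by simp)).clm_apply contDiff_const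
  have he1 : ContDiff ℝ (⊤ : ℕ∞) (deriv e) := hderiv_contDiff _ he
  have he2 : ContDiff ℝ (⊤ : ℕ∞) (deriv (deriv e)) := hderiv_contDiff _ he1
  have hSc : ContDiff ℝ (⊤ : ℕ∞) S := by
    rw [hS]; exact contDiff_const.mul (he1.comp hgc)
  have hSd : Differentiable ℝ S := hSc.differentiable (by simp)
  -- derivative of S along t at p
  have hSt : HasDerivAt (fun t => S (p.1, t))
      (ρ₀ * (deriv (deriv e) (g p) * dT g p)) p.2 := by
    rw [hS]
    exact (((he1.differentiable (by simp) (g p)).hasDerivAt.comp p.2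
      (hasDerivAt_dT hgd p))).const_mul ρ₀
  have hSt' : dT S p = ρ₀ * (deriv (deriv e) (g p) * dT g p) := hSt.deriv
  -- derivative of S along x at p
  have hSx : HasDerivAt (fun x => S (x, p.2))
      (ρ₀ * (deriv (deriv e) (g p) * dX g p)) p.1 := by
    rw [hS]
    exact (((he1.differentiable (by simp) (g p)).hasDerivAt.comp p.1
      (hasDerivAt_dX hgd p))).const_mul ρ₀
  have hSx' : dX S p = ρ₀ * (deriv (deriv e) (g p) * dX g p) := hSx.deriv
  -- product rule for v*S along t
  have hprod : dT (fun q => v q * S q) p = dT v p * S p + v p * dT S p := by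
    have := (hasDerivAt_dT hvd p).mul (hasDerivAt_dT hSd p)
    exact this.deriv
  -- derivative of I along x
  have hIx : HasDerivAt (fun x => I (x, p.2))
      (deriv e (g p) * dX g p + v p * dX v p) p.1 := by
    rw [hI]
    have h1 : HasDerivAt (fun x => e (g (x, p.2))) (deriv e (g p) * dX g p) p.1 :=
      (he.differentiable (by simp) (g p)).hasDerivAt.comp p.1 (hasDerivAt_dX hgd p)
    have h2 : HasDerivAt (fun x => (v (x, p.2)) ^ 2 / 2) (v p * dX v p) p.1 := by
      have : HasDerivAt (fun x => (v (x, p.2)) ^ 2 / 2) _ p.1 := ((hasDerivAt_dX hvd p).pow 2).div_const 2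
      convert this using 1
      ring
    exact h1.add h2
  have hIx' : dX I p = deriv e (g p) * dX g p + v p * dX v p := hIx.deriv
  -- momentum
  have hmom' : dT v p = deriv (deriv e) (g p) * dX g p := by
    have := hmom p
    rw [hSx'] at this
    exact mul_left_cancel₀ hρ.ne' this
  -- Clairaut
  have hcl : dT g p = dX v p := by
    rw [hg, hv]; exact clairaut hu p
  rw [hprod, hSt', hmom', hcl, hIx']
  simp only [hS, hc]
  ring
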